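/- If in a directed acyclic graph there exists a d-path from X to Y with respect to a conditioning set Z of cardinality k, then there exists a d-path from X to Y with respect to Z having at most k colliders. -/

import Mathlib

/-!
If a d-path has more than `|Z|` colliders, then by pigeonhole two colliders `c₁ < c₂` have
directed paths `c₁ → ⋯ → z` and `c₂ → ⋯ → z` to the same `z ∈ Z`; cutting each at its first
vertex in `Z`, their inner vertices lie outside `Z` yet have the descendant `z`, so they are
harmless whether or not they are colliders. Replacing the segment of the d-path between `c₁` and
`c₂` by `c₁ → ⋯ → z ← ⋯ ← c₂` therefore gives a d-path whose colliders are those before `c₁`,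
the vertex `z`, and those after `c₂` (acyclicity excludes colliders on the two directed
segments): the collider `c₂` is lost. Hence a d-path with the fewest colliders has at most `|Z|`.
-/

/-- A d-path `W 0, ..., W m` with respect to conditioning set `Z` in a digraph `E`:
consecutive vertices are adjacent (in either direction), internal non-colliders
are not in `Z`, and every collider has a descendant in `Z`. -/
def IsDPath {V : Type*} (E : V → V → Prop) (Z : Set V) (W : ℕ → V) (m : ℕ) : Prop :=
  (∀ i < m, E (W i) (W (i+1)) ∨ E (W (i+1)) (W i)) ∧
  (∀ i, 0 < i → i < m →
    ¬(E (W (i-1)) (W i) ∧ E (W (i+1)) (W i)) → W i ∉ Z) ∧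
  (∀ i, 0 < i → i < m →
    (E (W (i-1)) (W i) ∧ E (W (i+1)) (W i)) →
      ∃ d ∈ Z, Relation.ReflTransGen E (W i) d)

/-- The number of colliders of a path. -/
noncomputable def colliderCount {V : Type*} (E : V → V → Prop) (W : ℕ → V) (m : ℕ) : ℕ :=
  {i | 0 < i ∧ i < m ∧ E (W (i-1)) (W i) ∧ E (W (i+1)) (W i)}.ncard

open Relation

section DPath

variable {V : Type*} {E : V → V → Prop} {Z : Set V} {W : ℕ → V} {m : ℕ}

def colliderSet (E : V → V → Prop) (W : ℕ → V) (m : ℕ) : Set ℕ :=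
  {i | 0 < i ∧ i < m ∧ E (W (i-1)) (W i) ∧ E (W (i+1)) (W i)}

theorem finite_colliderSet : (colliderSet E W m).Finite :=
  (Set.finite_Iio m).subset fun _ hi => hi.2.1

def IsActiveTriple (E : V → V → Prop) (Z : Set V) (a b c : V) : Prop :=
  (¬(E a b ∧ E c b) → b ∉ Z) ∧ (E a b ∧ E c b → ∃ d ∈ Z, ReflTransGen E b d)

theorem IsActiveTriple.of_not_mem {a b c : V} (hb : b ∉ Z) (hd : ∃ d ∈ Z, ReflTransGen E b d) :
    IsActiveTriple E Z a b c :=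
  ⟨fun _ => hb, fun _ => hd⟩

theorem IsActiveTriple.of_mem {a b c : V} (hb : b ∈ Z) (hab : E a b) (hcb : E c b) :
    IsActiveTriple E Z a b c :=
  ⟨fun h => (h ⟨hab, hcb⟩).elim, fun _ => ⟨b, hb, .refl⟩⟩

theorem isDPath_iff : IsDPath E Z W m ↔
    (∀ i < m, E (W i) (W (i+1)) ∨ E (W (i+1)) (W i)) ∧
      ∀ i, 0 < i → i < m → IsActiveTriple E Z (W (i-1)) (W i) (W (i+1)) :=
  ⟨fun ⟨hE, hN, hC⟩ => ⟨hE, fun i hi him => ⟨hN i hi him, hC i hi him⟩⟩,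
    fun ⟨hE, hA⟩ => ⟨hE, fun i hi him => (hA i hi him).1, fun i hi him => (hA i hi him).2⟩⟩

structure IsDescentInto (E : V → V → Prop) (Z : Set V) (f : ℕ → V) (p : ℕ) : Prop where
  edge : ∀ t < p, E (f t) (f (t+1))
  not_mem : ∀ t < p, f t ∉ Z
  mem : f p ∈ Z

theorem IsDescentInto.reflTransGen {f : ℕ → V} {p t : ℕ} (hf : IsDescentInto E Z f p)
    (ht : t ≤ p) : ReflTransGen E (f t) (f p) :=
  Nat.decreasingInduction (fun k hk ih => ih.head (hf.edge k hk)) .refl ht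

theorem exists_isDescentInto {a d : V} (had : ReflTransGen E a d) (hd : d ∈ Z) :
    ∃ f p, f 0 = a ∧ IsDescentInto E Z f p := by
  induction had using ReflTransGen.head_induction_on with
  | refl => exact ⟨fun _ => d, 0, rfl, ⟨by simp, by simp, hd⟩⟩
  | @head a b hab _ ih =>
    by_cases ha : a ∈ Z
    · exact ⟨fun _ => a, 0, rfl, ⟨by simp, by simp, ha⟩⟩
    obtain ⟨f, p, rfl, hf⟩ := ih
    refine ⟨fun | 0 => a | t + 1 => f t, p + 1, rfl, ⟨?_, ?_, hf.mem⟩⟩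
    · rintro (_ | t) ht
      exacts [hab, hf.edge t (by omega)]
    · rintro (_ | t) ht
      exacts [ha, hf.not_mem t (by omega)]

def splice (W f g : ℕ → V) (c₁ p q c₂ i : ℕ) : V :=
  if i ≤ c₁ then W i
  else if i ≤ c₁ + p then f (i - c₁)
  else if i ≤ c₁ + p + q then g (c₁ + p + q - i)
  else W (i - (c₁ + p + q) + c₂)

variable {f g : ℕ → V} {c₁ p q c₂ i : ℕ}

theorem splice_of_le (hi : i ≤ c₁) : splice W f g c₁ p q c₂ i = W i := if_pos hi

theorem splice_of_descent (h₁ : f 0 = W c₁) (hi : c₁ ≤ i) (hi' : i ≤ c₁ + p) :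
    splice W f g c₁ p q c₂ i = f (i - c₁) := by
  unfold splice
  split_ifs
  · obtain rfl : i = c₁ := by omega
    simp [h₁]
  · rfl

theorem splice_of_ascent (h₁ : f 0 = W c₁) (hfg : f p = g q) (hi : c₁ + p ≤ i)
    (hi' : i ≤ c₁ + p + q) : splice W f g c₁ p q c₂ i = g (c₁ + p + q - i) := by
  rcases hi.eq_or_lt with rfl | hlt
  · rw [splice_of_descent h₁ (by omega) le_rfl]
    simp [hfg]
  · simp only [splice, if_neg (show ¬i ≤ c₁ by omega), if_neg hlt.not_ge, if_pos hi']

theorem splice_of_ge (h₁ : f 0 = W c₁) (hfg : f p = g q) (h₂ : g 0 = W c₂)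
    (hi : c₁ + p + q ≤ i) : splice W f g c₁ p q c₂ i = W (i - (c₁ + p + q) + c₂) := by
  rcases hi.eq_or_lt with rfl | hlt
  · rw [splice_of_ascent h₁ hfg (by omega) le_rfl]
    simp [h₂]
  · simp only [splice, if_neg (show ¬i ≤ c₁ by omega), if_neg (show ¬i ≤ c₁ + p by omega),
      if_neg hlt.not_ge]

theorem splice_descent_edge (h₁ : f 0 = W c₁) (hf : ∀ t < p, E (f t) (f (t+1)))
    (hi : c₁ ≤ i) (hi' : i < c₁ + p) :
    E (splice W f g c₁ p q c₂ i) (splice W f g c₁ p q c₂ (i+1)) := by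
  rw [splice_of_descent h₁ hi hi'.le, splice_of_descent h₁ (by omega) hi',
    show i + 1 - c₁ = i - c₁ + 1 by omega]
  exact hf _ (by omega)

theorem splice_ascent_edge (h₁ : f 0 = W c₁) (hfg : f p = g q)
    (hg : ∀ t < q, E (g t) (g (t+1))) (hi : c₁ + p ≤ i) (hi' : i < c₁ + p + q) :
    E (splice W f g c₁ p q c₂ (i+1)) (splice W f g c₁ p q c₂ i) := by
  rw [splice_of_ascent h₁ hfg hi hi'.le, splice_of_ascent h₁ hfg (by omega) hi',
    show c₁ + p + q - i = c₁ + p + q - (i + 1) + 1 by omega]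
  exact hg _ (by omega)

theorem splice_apex_collider (h₁ : f 0 = W c₁) (hfg : f p = g q) (h₂ : g 0 = W c₂)
    (hf : ∀ t < p, E (f t) (f (t+1))) (hg : ∀ t < q, E (g t) (g (t+1)))
    (hc₁ : E (W (c₁-1)) (W c₁)) (hc₂ : E (W (c₂+1)) (W c₂)) :
    E (splice W f g c₁ p q c₂ (c₁+p-1)) (splice W f g c₁ p q c₂ (c₁+p)) ∧
      E (splice W f g c₁ p q c₂ (c₁+p+1)) (splice W f g c₁ p q c₂ (c₁+p)) := by
  constructor
  · rcases Nat.eq_zero_or_pos p with rfl | hp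
    · simpa only [add_zero, splice_of_le (Nat.sub_le c₁ 1), splice_of_le le_rfl] using hc₁
    · simpa only [Nat.sub_add_cancel (show 1 ≤ c₁ + p by omega)] using
        splice_descent_edge (g := g) (q := q) (c₂ := c₂) (i := c₁ + p - 1) h₁ hf (by omega)
          (by omega)
  · rcases Nat.eq_zero_or_pos q with rfl | hq
    · rw [splice_of_ge h₁ hfg h₂ (by omega), splice_of_ge h₁ hfg h₂ (i := c₁ + p) (by omega),
        show c₁ + p + 1 - (c₁ + p + 0) + c₂ = c₂ + 1 by omega, add_zero, Nat.sub_self, zero_add]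
      exact hc₂
    · exact splice_ascent_edge h₁ hfg hg le_rfl (by omega)

theorem splice_adj (hW : IsDPath E Z W m) (hf : ∀ t < p, E (f t) (f (t+1)))
    (hg : ∀ t < q, E (g t) (g (t+1))) (h₁ : f 0 = W c₁) (hfg : f p = g q)
    (h₂ : g 0 = W c₂) (hc₁ : c₁ ≤ m) (hc₂ : c₂ ≤ m) (hi : i < c₁ + p + q + (m - c₂)) :
    E (splice W f g c₁ p q c₂ i) (splice W f g c₁ p q c₂ (i+1)) ∨
      E (splice W f g c₁ p q c₂ (i+1)) (splice W f g c₁ p q c₂ i) := by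
  rcases lt_or_ge i c₁ with h | h
  · rw [splice_of_le h.le, splice_of_le h]
    exact hW.1 i (by omega)
  rcases lt_or_ge i (c₁ + p) with h' | h'
  · exact .inl (splice_descent_edge h₁ hf h h')
  rcases lt_or_ge i (c₁ + p + q) with h'' | h''
  · exact .inr (splice_ascent_edge h₁ hfg hg h' h'')
  rw [splice_of_ge h₁ hfg h₂ h'', splice_of_ge h₁ hfg h₂ (by omega),
    show i + 1 - (c₁ + p + q) + c₂ = i - (c₁ + p + q) + c₂ + 1 by omega]
  exact hW.1 _ (by omega)

theorem isActiveTriple_splice (hW : IsDPath E Z W m) (hf : IsDescentInto E Z f p)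
    (hg : IsDescentInto E Z g q) (h₁ : f 0 = W c₁) (hfg : f p = g q) (h₂ : g 0 = W c₂)
    (hc₁ : c₁ ∈ colliderSet E W m) (hc₂ : c₂ ∈ colliderSet E W m) (hi₀ : 0 < i)
    (hi : i < c₁ + p + q + (m - c₂)) :
    IsActiveTriple E Z (splice W f g c₁ p q c₂ (i-1)) (splice W f g c₁ p q c₂ i)
      (splice W f g c₁ p q c₂ (i+1)) := by
  have hA := (isDPath_iff.1 hW).2
  have := hc₁.2.1
  have := hc₂.2.1
  rcases lt_or_ge i c₁ with h | h
  · rw [splice_of_le (by omega), splice_of_le h.le, splice_of_le h]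
    exact hA i hi₀ (by omega)
  rcases lt_or_ge i (c₁ + p) with h' | h'
  · rw [splice_of_descent h₁ h h'.le]
    exact .of_not_mem (hf.not_mem _ (by omega)) ⟨_, hf.mem, hf.reflTransGen (by omega)⟩
  rcases h'.eq_or_lt with rfl | h'
  · obtain ⟨hl, hr⟩ := splice_apex_collider h₁ hfg h₂ hf.edge hg.edge hc₁.2.2.1 hc₂.2.2.2
    refine .of_mem ?_ hl hr
    rw [splice_of_descent h₁ h le_rfl, Nat.add_sub_cancel_left]
    exact hf.mem
  rcases le_or_gt i (c₁ + p + q) with h'' | h''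
  · rw [splice_of_ascent h₁ hfg h'.le h'']
    exact .of_not_mem (hg.not_mem _ (by omega)) ⟨g q, hg.mem, hg.reflTransGen (by omega)⟩
  rw [splice_of_ge h₁ hfg h₂ (by omega), splice_of_ge h₁ hfg h₂ h''.le,
    splice_of_ge h₁ hfg h₂ (by omega),
    show i - 1 - (c₁ + p + q) + c₂ = i - (c₁ + p + q) + c₂ - 1 by omega,
    show i + 1 - (c₁ + p + q) + c₂ = i - (c₁ + p + q) + c₂ + 1 by omega]
  exact hA (i - (c₁ + p + q) + c₂) (by omega) (by omega)

theorem isDPath_splice (hW : IsDPath E Z W m) (hf : IsDescentInto E Z f p)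
    (hg : IsDescentInto E Z g q) (h₁ : f 0 = W c₁) (hfg : f p = g q) (h₂ : g 0 = W c₂)
    (hc₁ : c₁ ∈ colliderSet E W m) (hc₂ : c₂ ∈ colliderSet E W m) :
    IsDPath E Z (splice W f g c₁ p q c₂) (c₁ + p + q + (m - c₂)) :=
  isDPath_iff.2 ⟨fun _ hi => splice_adj hW hf.edge hg.edge h₁ hfg h₂ hc₁.2.1.le hc₂.2.1.le hi,
    fun _ hi₀ hi => isActiveTriple_splice hW hf hg h₁ hfg h₂ hc₁ hc₂ hi₀ hi⟩

theorem mem_colliderSet_splice (hasymm : ∀ a b, E a b → ¬E b a) (h₁ : f 0 = W c₁)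
    (hfg : f p = g q) (h₂ : g 0 = W c₂) (hf : ∀ t < p, E (f t) (f (t+1)))
    (hg : ∀ t < q, E (g t) (g (t+1))) (hc₁ : c₁ ≤ m)
    (hi : i ∈ colliderSet E (splice W f g c₁ p q c₂) (c₁ + p + q + (m - c₂))) :
    (i < c₁ ∧ i ∈ colliderSet E W m) ∨ i = c₁ + p ∨
      (c₁ + p + q < i ∧ i - (c₁ + p + q) + c₂ ∈ colliderSet E W m) := by
  obtain ⟨hi₀, hi, hl, hr⟩ := hi
  rcases lt_or_ge i c₁ with h | h
  · simp only [splice_of_le (show i - 1 ≤ c₁ by omega), splice_of_le h.le,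
      splice_of_le (show i + 1 ≤ c₁ from h)] at hl hr
    exact .inl ⟨h, hi₀, by omega, hl, hr⟩
  rcases lt_or_ge i (c₁ + p) with h' | h'
  · exact absurd hr (hasymm _ _ (splice_descent_edge h₁ hf h h'))
  rcases h'.eq_or_lt with h' | h'
  · exact .inr (.inl h'.symm)
  rcases le_or_gt i (c₁ + p + q) with h'' | h''
  · have := splice_ascent_edge (W := W) (c₂ := c₂) h₁ hfg hg (i := i - 1) (by omega) (by omega)
    rw [Nat.sub_add_cancel (by omega)] at this
    exact absurd hl (hasymm _ _ this)
  rw [splice_of_ge h₁ hfg h₂ (by omega), splice_of_ge h₁ hfg h₂ h''.le,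
    show i - 1 - (c₁ + p + q) + c₂ = i - (c₁ + p + q) + c₂ - 1 by omega] at hl
  rw [splice_of_ge h₁ hfg h₂ (by omega), splice_of_ge h₁ hfg h₂ h''.le,
    show i + 1 - (c₁ + p + q) + c₂ = i - (c₁ + p + q) + c₂ + 1 by omega] at hr
  exact .inr (.inr ⟨h'', by omega, by omega, hl, hr⟩)

theorem ncard_colliderSet_splice_lt (hasymm : ∀ a b, E a b → ¬E b a) (h₁ : f 0 = W c₁)
    (hfg : f p = g q) (h₂ : g 0 = W c₂) (hf : ∀ t < p, E (f t) (f (t+1)))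
    (hg : ∀ t < q, E (g t) (g (t+1))) (hc₁ : c₁ ∈ colliderSet E W m)
    (hc₂ : c₂ ∈ colliderSet E W m) (h₁₂ : c₁ < c₂) :
    (colliderSet E (splice W f g c₁ p q c₂) (c₁ + p + q + (m - c₂))).ncard <
      (colliderSet E W m).ncard := by
  set S := colliderSet E (splice W f g c₁ p q c₂) (c₁ + p + q + (m - c₂))
  -- the apex is charged to `c₁`, and nothing to `c₂`
  let φ : ℕ → ℕ := fun i => if i < c₁ then i else if i ≤ c₁ + p + q then c₁
    else i - (c₁ + p + q) + c₂
  have hS : ∀ i ∈ S, _ := fun i hi =>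
    mem_colliderSet_splice hasymm h₁ hfg h₂ hf hg hc₁.2.1.le hi
  have hinj : Set.InjOn φ S := by
    intro i hi j hj hij
    rcases hS i hi with ⟨hi', -⟩ | rfl | ⟨hi', -⟩ <;>
      rcases hS j hj with ⟨hj', -⟩ | rfl | ⟨hj', -⟩ <;>
      simp only [φ] at hij <;> (try split_ifs at hij) <;> omega
  have hφ : φ '' S ⊂ colliderSet E W m := by
    refine Set.ssubset_iff_exists.2 ⟨?_, c₂, hc₂, ?_⟩
    · rintro _ ⟨i, hi, rfl⟩
      rcases hS i hi with ⟨hi', hiW⟩ | rfl | ⟨hi', hiW⟩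
      · simpa [φ, hi'] using hiW
      · simpa [φ] using hc₁
      · simpa [φ, show ¬i < c₁ by omega, show ¬i ≤ c₁ + p + q by omega] using hiW
    · rintro ⟨i, hi, hic⟩
      rcases hS i hi with ⟨hi', -⟩ | rfl | ⟨hi', -⟩ <;> simp only [φ] at hic <;>
        split_ifs at hic <;> omega
  rw [← hinj.ncard_image]
  exact Set.ncard_lt_ncard hφ finite_colliderSet

theorem IsDPath.exists_fewer_colliders_of_common_descent (hasymm : ∀ a b, E a b → ¬E b a)
    (hW : IsDPath E Z W m)
    (hc₁ : c₁ ∈ colliderSet E W m) (hc₂ : c₂ ∈ colliderSet E W m) (h₁₂ : c₁ < c₂)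
    (hf : IsDescentInto E Z f p) (hg : IsDescentInto E Z g q)
    (h₁ : f 0 = W c₁) (hfg : f p = g q) (h₂ : g 0 = W c₂) :
    ∃ m' W', IsDPath E Z W' m' ∧ W' 0 = W 0 ∧ W' m' = W m ∧
      colliderCount E W' m' < colliderCount E W m := by
  refine ⟨_, _, isDPath_splice hW hf hg h₁ hfg h₂ hc₁ hc₂, splice_of_le (Nat.zero_le _), ?_,
    ncard_colliderSet_splice_lt hasymm h₁ hfg h₂ hf.edge hg.edge hc₁ hc₂ h₁₂⟩
  rw [splice_of_ge h₁ hfg h₂ (Nat.le_add_right _ _)]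
  congr 1
  have := hc₂.2.1
  omega

theorem IsDPath.exists_fewer_colliders {Z : Finset V} (hasymm : ∀ a b, E a b → ¬E b a)
    (hW : IsDPath E Z W m) (hZ : Z.card < colliderCount E W m) :
    ∃ m' W', IsDPath E Z W' m' ∧ W' 0 = W 0 ∧ W' m' = W m ∧
      colliderCount E W' m' < colliderCount E W m := by
  have : Nonempty V := ⟨W 0⟩
  have hdesc : ∀ i ∈ colliderSet E W m, ∃ f p, f 0 = W i ∧ IsDescentInto E Z f p :=
    fun i hi =>
      have ⟨_, hd, hid⟩ := ((isDPath_iff.1 hW).2 i hi.1 hi.2.1).2 hi.2.2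
      exists_isDescentInto hid hd
  choose! f p hf₀ hf using hdesc
  obtain ⟨a, ha, b, hb, hab, hfab⟩ := Set.exists_ne_map_eq_of_ncard_lt_of_maps_to
    (t := (Z : Set V)) (by rwa [Set.ncard_coe_finset]) (fun i hi => (hf i hi).mem)
  rcases hab.lt_or_gt with h | h
  · exact hW.exists_fewer_colliders_of_common_descent hasymm ha hb h (hf a ha) (hf b hb)
      (hf₀ a ha) hfab (hf₀ b hb)
  · exact hW.exists_fewer_colliders_of_common_descent hasymm hb ha h (hf b hb) (hf a ha)
      (hf₀ b hb) hfab.symm (hf₀ a ha)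

end DPath

/-- If there is a d-path from `X` to `Y` with respect to a conditioning set `Z` of
cardinality `k` in a DAG, then there is one with at most `k` colliders. -/
theorem dpath_few_colliders {V : Type*} (E : V → V → Prop)
    (hacyc : ∀ v, ¬ Relation.TransGen E v v)
    (Z : Finset V) (k : ℕ) (hk : Z.card = k) (X Y : V)
    (h : ∃ (m : ℕ) (W : ℕ → V), IsDPath E (↑Z) W m ∧ W 0 = X ∧ W m = Y) :
    ∃ (m : ℕ) (W : ℕ → V), IsDPath E (↑Z) W m ∧ W 0 = X ∧ W m = Y ∧
      colliderCount E W m ≤ k := by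
  classical
  have hasymm : ∀ a b, E a b → ¬E b a := fun a b hab hba =>
    hacyc a (.tail (.single hab) hba)
  let P (n : ℕ) : Prop :=
    ∃ (m : ℕ) (W : ℕ → V), IsDPath E (↑Z) W m ∧ W 0 = X ∧ W m = Y ∧ colliderCount E W m = n
  have hP : ∃ n, P n := have ⟨m, W, hW, hX, hY⟩ := h; ⟨_, m, W, hW, hX, hY, rfl⟩
  obtain ⟨m, W, hW, hX, hY, hmin⟩ := Nat.find_spec hP
  refine ⟨m, W, hW, hX, hY, not_lt.1 fun hgt => ?_⟩
  obtain ⟨m', W', hW', h₀, hm, hlt⟩ := hW.exists_fewer_colliders hasymm (hk ▸ hgt)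
  exact Nat.find_min hP (hmin ▸ hlt) ⟨m', W', hW', h₀.trans hX, hm.trans hY, rfl⟩
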